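/- (Remark 7.7, case b = 1.) Let p > 3 be a prime, let k be an even integer, and let h > 0 be a real number with (⌈(p−3)h⌉ − 1)/(p−1) ≥ 1. Then there exists an (automatically even) integer k' such that: (a) k' ≡ k (mod (p−1)·p^{⌊m_p^{(1)}(h)⌋}); (b) k'−1 ≢ 0 (mod p+1); and (c) ⌊(k'−2)/(p−1)⌋ < h < (k'−2)/2. -/

import Mathlib

/-!
Put `C = (⌈(p−3)h⌉ − 1)/(p−1) ≥ 1` and `M = (p−1)p^m` with `m = ⌊log_p C⌋`. Then `p^m ≤ C`, so
`M ≤ ⌈(p−3)h⌉ − 1 < (p−3)h`. The residue class of `k` modulo `M` meets every half-open interval of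
length `M`; take `k'` in it with `2h + 2 < k' ≤ 2h + 2 + M`. Then `k' − 2 < 2h + (p−3)h = (p−1)h`,
which gives (c), and `k'` is even because `k` and `M` are, so the odd number `k' − 1` is not
divisible by the even number `p + 1`.
-/

/-- `m_p^{(1)}(h) = log_p((⌈(p−3)h⌉ − 1)/(p−1))` if `(⌈(p−3)h⌉ − 1)/(p−1) ≥ 1`,
and `0` otherwise. -/
noncomputable def mp1 (p : ℕ) (h : ℝ) : ℝ :=
  if 1 ≤ ((⌈((p : ℝ) - 3) * h⌉ : ℝ) - 1) / ((p : ℝ) - 1) then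
    Real.logb p (((⌈((p : ℝ) - 3) * h⌉ : ℝ) - 1) / ((p : ℝ) - 1))
  else 0

theorem Int.exists_modEq_mem_Ioc {M : ℤ} (hM : 0 < M) (k : ℤ) (x : ℝ) :
    ∃ k' : ℤ, k' ≡ k [ZMOD M] ∧ x < k' ∧ (k' : ℝ) ≤ x + M := by
  obtain ⟨hlo, hhi⟩ := toIocMod_mem_Ioc hM ⌊x⌋ k
  refine ⟨toIocMod hM ⌊x⌋ k, Int.modEq_iff_dvd.mpr ⟨toIocDiv hM ⌊x⌋ k, ?_⟩, ?_, ?_⟩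
  · rw [self_sub_toIocMod_eq_mul, mul_comm, Int.cast_id]
  · exact Int.floor_lt.mp hlo
  · calc ((toIocMod hM ⌊x⌋ k : ℤ) : ℝ) ≤ (⌊x⌋ : ℝ) + M := by exact_mod_cast hhi
      _ ≤ x + M := by gcongr; exact Int.floor_le x

theorem Real.pow_toNat_floor_logb_le (b : ℕ) {r : ℝ} (hr : 1 ≤ r) :
    (b : ℝ) ^ ⌊Real.logb b r⌋.toNat ≤ r := by
  rw [Real.floor_logb_natCast (by linarith), Int.log_of_one_le_right b hr, Int.toNat_natCast]
  calc (b : ℝ) ^ Nat.log b ⌊r⌋₊ ≤ (⌊r⌋₊ : ℕ) := by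
        exact_mod_cast Nat.pow_log_le_self b (Nat.floor_pos.mpr hr).ne'
    _ ≤ r := Nat.floor_le (by linarith)

theorem Int.not_dvd_sub_one_of_even {m k : ℤ} (hm : Even m) (hk : Even k) : ¬ m ∣ k - 1 :=
  fun hdvd => Int.not_even_iff_odd.mpr (hk.sub_odd odd_one)
    (even_iff_two_dvd.mpr (hm.two_dvd.trans hdvd))

theorem sub_one_mul_pow_floor_mp1_lt {p : ℕ} (hp : 1 < p) {h : ℝ}
    (hstar : 1 ≤ ((⌈((p : ℝ) - 3) * h⌉ : ℝ) - 1) / ((p : ℝ) - 1)) :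
    ((p : ℝ) - 1) * (p : ℝ) ^ ⌊mp1 p h⌋.toNat < ((p : ℝ) - 3) * h := by
  have hp1 : (0 : ℝ) < (p : ℝ) - 1 := by
    have : (1 : ℝ) < p := by exact_mod_cast hp
    linarith
  rw [mp1, if_pos hstar]
  calc ((p : ℝ) - 1) * (p : ℝ) ^ _
      ≤ ((p : ℝ) - 1) * (((⌈((p : ℝ) - 3) * h⌉ : ℝ) - 1) / ((p : ℝ) - 1)) := by
        gcongr; exact Real.pow_toNat_floor_logb_le p hstar
    _ = (⌈((p : ℝ) - 3) * h⌉ : ℝ) - 1 := mul_div_cancel₀ _ hp1.ne'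
    _ < ((p : ℝ) - 3) * h := by linarith [Int.ceil_lt_add_one (((p : ℝ) - 3) * h)]

theorem exists_weight_with_deep_congruence_b1_general (p : ℕ) (hp : p.Prime) (hp3 : 3 < p)
    (k : ℤ) (hk : Even k) (h : ℝ)
    (hstar : 1 ≤ ((⌈((p : ℝ) - 3) * h⌉ : ℝ) - 1) / ((p : ℝ) - 1)) :
    ∃ k' : ℤ,
      Int.ModEq (((p : ℤ) - 1) * (p : ℤ) ^ (⌊mp1 p h⌋.toNat)) k' k ∧
      ¬ Int.ModEq ((p : ℤ) + 1) (k' - 1) 0 ∧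
      ((⌊((k' : ℝ) - 2) / ((p : ℝ) - 1)⌋ : ℝ) < h ∧ h < ((k' : ℝ) - 2) / 2) := by
  set M : ℤ := ((p : ℤ) - 1) * (p : ℤ) ^ ⌊mp1 p h⌋.toNat
  have hp_odd : Odd (p : ℤ) := by exact_mod_cast hp.odd_of_ne_two (by omega)
  have hp1 : (0 : ℝ) < (p : ℝ) - 1 := by
    have : (3 : ℝ) < p := by exact_mod_cast hp3
    linarith
  have hM_pos : 0 < M := mul_pos (by omega) (pow_pos (by omega) _)
  have hM_lt : (M : ℝ) < ((p : ℝ) - 3) * h := by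
    simpa [M] using sub_one_mul_pow_floor_mp1_lt (by omega) hstar
  obtain ⟨k', hmod, hlo, hhi⟩ := Int.exists_modEq_mem_Ioc hM_pos k (2 * h + 2)
  have hk'_even : Even k' := by
    obtain ⟨c, hc⟩ := hmod.symm.dvd
    have hM_even : Even M := (hp_odd.sub_odd odd_one).mul_right _
    rw [show k' = k + M * c by omega]
    exact hk.add (hM_even.mul_right c)
  refine ⟨k', hmod, ?_, ?_, by linarith⟩
  · rw [Int.modEq_zero_iff_dvd]
    exact Int.not_dvd_sub_one_of_even hp_odd.add_one hk'_even
  · refine (Int.floor_le _).trans_lt ((div_lt_iff₀ hp1).mpr ?_)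
    linarith

/-- **Remark 7.7, case b = 1.** Let `p > 3` be prime, `k` an even integer, and
`h > 0` a real with `(⌈(p−3)h⌉ − 1)/(p−1) ≥ 1`. Then there is an integer `k'` with
(a) `k' ≡ k (mod (p−1)p^⌊m_p^{(1)}(h)⌋)`, (b) `k'−1 ≢ 0 (mod p+1)`, and
(c) `⌊(k'−2)/(p−1)⌋ < h < (k'−2)/2`. -/
theorem exists_weight_with_deep_congruence_b1 (p : ℕ) (hp : p.Prime) (hp3 : 3 < p)
    (k : ℤ) (hk : Even k) (h : ℝ) (hh : 0 < h)
    (hstar : 1 ≤ ((⌈((p : ℝ) - 3) * h⌉ : ℝ) - 1) / ((p : ℝ) - 1)) :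
    ∃ k' : ℤ,
      Int.ModEq (((p : ℤ) - 1) * (p : ℤ) ^ (⌊mp1 p h⌋.toNat)) k' k ∧
      ¬ Int.ModEq ((p : ℤ) + 1) (k' - 1) 0 ∧
      ((⌊((k' : ℝ) - 2) / ((p : ℝ) - 1)⌋ : ℝ) < h ∧ h < ((k' : ℝ) - 2) / 2) :=
  exists_weight_with_deep_congruence_b1_general p hp hp3 k hk h hstar
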